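/- arXiv:math/0512641 — 2 statements merged into one kernel-verified Lean document; each statement's English description precedes it below -/
import Mathlib

section
/- Let F_1 be the class of nondecreasing functions f : [0,1] → [0,1]. For every 0 < ε < 1, log N_[](ε, F_1, ‖·‖_1) ≤ C/ε for some absolute constant C, where N_[] is the bracketing number in L^1([0,1], Lebesgue). -/
open MeasureTheory
open scoped ENNReal

namespace BracketAux

/-- index of the grid interval containing `x` (grid of `n+1` intervals of length `1/(n+1)`). -/
noncomputable def idx (n : ℕ) (x : ℝ) : ℕ := min n ⌊x * (n + 1)⌋₊

lemma idx_le (n : ℕ) (x : ℝ) : idx n x ≤ n := min_le_left _ _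

/-- lower bracket function associated to a monotone sequence `a`. -/
noncomputable def loF (n : ℕ) (a : Fin (n + 2) → Fin (n + 2)) (x : ℝ) : ℝ :=
  (a ⟨idx n x, by have := idx_le n x; omega⟩ : ℕ) / (n + 1)

/-- upper bracket function associated to a monotone sequence `a`. -/
noncomputable def hiF (n : ℕ) (a : Fin (n + 2) → Fin (n + 2)) (x : ℝ) : ℝ :=
  ((a ⟨idx n x + 1, by have := idx_le n x; omega⟩ : ℕ) + 1) / (n + 1)

lemma idx_eq_of_mem (n : ℕ) (j : Fin (n + 1)) {x : ℝ}
    (hx : x ∈ Set.Ico ((j : ℝ) / (n + 1)) (((j : ℝ) + 1) / (n + 1))) :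
    idx n x = j := by
  have hn1 : (0 : ℝ) < (n : ℝ) + 1 := by positivity
  obtain ⟨h1, h2⟩ := hx
  have hge : (j : ℝ) ≤ x * (n + 1) := by
    rw [div_le_iff₀ hn1] at h1; linarith
  have hlt : x * (n + 1) < (j : ℝ) + 1 := by
    rw [lt_div_iff₀ hn1] at h2; linarith
  have hx0 : 0 ≤ x * (n + 1) := le_trans (by positivity) hge
  have hfl : ⌊x * (n + 1)⌋₊ = (j : ℕ) := by
    rw [Nat.floor_eq_iff (by exact_mod_cast hx0)]
    exact ⟨hge, by exact_mod_cast hlt⟩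
  have hj : (j : ℕ) ≤ n := Nat.lt_succ_iff.mp j.isLt
  simp [idx, hfl, hj]

lemma Ico_subset_iUnion (n : ℕ) :
    Set.Ico (0 : ℝ) 1 ⊆
      ⋃ j : Fin (n + 1), Set.Ico ((j : ℝ) / (n + 1)) (((j : ℝ) + 1) / (n + 1)) := by
  intro x hx
  have hn1 : (0 : ℝ) < (n : ℝ) + 1 := by positivity
  have hx0 : (0 : ℝ) ≤ x * (n + 1) := mul_nonneg hx.1 hn1.le
  have hlt : x * (n + 1) < (n : ℝ) + 1 := by nlinarith [hx.2]
  have hjn : ⌊x * (n + 1)⌋₊ < n + 1 := by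
    have := Nat.floor_le_floor hlt.le
    have h2 : ⌊((n : ℝ) + 1)⌋₊ = n + 1 := by
      rw [show ((n : ℝ) + 1) = ((n + 1 : ℕ) : ℝ) by push_cast; ring, Nat.floor_natCast]
    by_contra hcon
    push_neg at hcon
    have hge : ((n : ℝ) + 1) ≤ x * (n + 1) := by
      calc ((n : ℝ) + 1) = ((n + 1 : ℕ) : ℝ) := by push_cast; ring
        _ ≤ (⌊x * (n + 1)⌋₊ : ℝ) := by exact_mod_cast hcon
        _ ≤ x * (n + 1) := Nat.floor_le hx0
    linarith
  refine Set.mem_iUnion.2 ⟨⟨⌊x * (n + 1)⌋₊, hjn⟩, ?_, ?_⟩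
  · rw [div_le_iff₀ hn1]
    exact (Nat.floor_le hx0).trans_eq rfl
  · rw [lt_div_iff₀ hn1]
    push_cast
    exact Nat.lt_floor_add_one _

lemma hiF_sub_loF_on (n : ℕ) (a : Fin (n + 2) → Fin (n + 2)) (j : Fin (n + 1)) {x : ℝ}
    (hx : x ∈ Set.Ico ((j : ℝ) / (n + 1)) (((j : ℝ) + 1) / (n + 1))) :
    hiF n a x - loF n a x =
      (((a j.succ : ℕ) : ℝ) + 1 - ((a j.castSucc : ℕ) : ℝ)) / (n + 1) := by
  have h := idx_eq_of_mem n j hx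
  have h1 : (⟨idx n x, by have := idx_le n x; omega⟩ : Fin (n + 2)) = j.castSucc := by
    ext; simpa using h
  have h2 : (⟨idx n x + 1, by have := idx_le n x; omega⟩ : Fin (n + 2)) = j.succ := by
    ext; simpa using h
  rw [loF, hiF, h1, h2]
  ring

lemma loF_le_hiF (n : ℕ) {a : Fin (n + 2) → Fin (n + 2)} (ha : Monotone a) (x : ℝ) :
    loF n a x ≤ hiF n a x := by
  have hn1 : (0 : ℝ) < (n : ℝ) + 1 := by positivity
  have hle : a ⟨idx n x, by have := idx_le n x; omega⟩
      ≤ a ⟨idx n x + 1, by have := idx_le n x; omega⟩ := ha (by simp [Fin.le_def])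
  have : ((a ⟨idx n x, by have := idx_le n x; omega⟩ : ℕ) : ℝ)
      ≤ ((a ⟨idx n x + 1, by have := idx_le n x; omega⟩ : ℕ) : ℝ) := by exact_mod_cast hle
  rw [loF, hiF]
  gcongr
  linarith

/-- The `L¹` width of the bracket is at most `2/(n+1)`. -/
lemma width_le (n : ℕ) {a : Fin (n + 2) → Fin (n + 2)} (ha : Monotone a) :
    eLpNorm (fun x => hiF n a x - loF n a x) 1 (volume.restrict (Set.Icc (0:ℝ) 1))
      ≤ ENNReal.ofReal (2 / (n + 1)) := by
  have hn1 : (0 : ℝ) < (n : ℝ) + 1 := by positivity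
  rw [eLpNorm_one_eq_lintegral_enorm]
  have hnn : ∀ x : ℝ, ‖hiF n a x - loF n a x‖ₑ
      = ENNReal.ofReal (hiF n a x - loF n a x) := fun x =>
    Real.enorm_eq_ofReal (sub_nonneg.2 (loF_le_hiF n ha x))
  simp_rw [hnn]
  have step1 : ∫⁻ x in Set.Icc (0:ℝ) 1, ENNReal.ofReal (hiF n a x - loF n a x)
      = ∫⁻ x in Set.Ico (0:ℝ) 1, ENNReal.ofReal (hiF n a x - loF n a x) :=
    (setLIntegral_congr Ico_ae_eq_Icc).symm
  rw [step1]
  have step2 : ∫⁻ x in Set.Ico (0:ℝ) 1, ENNReal.ofReal (hiF n a x - loF n a x)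
      ≤ ∑ j : Fin (n + 1), ∫⁻ x in Set.Ico ((j : ℝ) / (n + 1)) (((j : ℝ) + 1) / (n + 1)),
          ENNReal.ofReal (hiF n a x - loF n a x) := by
    calc _ ≤ ∫⁻ x in ⋃ j : Fin (n + 1),
            Set.Ico ((j : ℝ) / (n + 1)) (((j : ℝ) + 1) / (n + 1)),
            ENNReal.ofReal (hiF n a x - loF n a x) :=
          lintegral_mono_set (Ico_subset_iUnion n)
      _ ≤ ∑' j : Fin (n + 1), ∫⁻ x in Set.Ico ((j : ℝ) / (n + 1)) (((j : ℝ) + 1) / (n + 1)),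
            ENNReal.ofReal (hiF n a x - loF n a x) := lintegral_iUnion_le _ _
      _ = _ := tsum_fintype _
  refine step2.trans ?_
  have step3 : ∀ j : Fin (n + 1),
      ∫⁻ x in Set.Ico ((j : ℝ) / (n + 1)) (((j : ℝ) + 1) / (n + 1)),
          ENNReal.ofReal (hiF n a x - loF n a x)
      = ENNReal.ofReal ((((a j.succ : ℕ) : ℝ) + 1 - ((a j.castSucc : ℕ) : ℝ)) / (n + 1))
          * ENNReal.ofReal (1 / (n + 1)) := by
    intro j
    rw [setLIntegral_congr_fun measurableSet_Ico
      (fun x hx => by rw [hiF_sub_loF_on n a j hx]),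
      setLIntegral_const, Real.volume_Ico]
    congr 1
    congr 1
    field_simp
    ring
  simp_rw [step3]
  have hterm : ∀ j : Fin (n + 1),
      ENNReal.ofReal ((((a j.succ : ℕ) : ℝ) + 1 - ((a j.castSucc : ℕ) : ℝ)) / (n + 1))
          * ENNReal.ofReal (1 / (n + 1))
      = ENNReal.ofReal (((((a j.succ : ℕ) : ℝ) + 1 - ((a j.castSucc : ℕ) : ℝ)) / (n + 1))
          * (1 / (n + 1))) := fun j =>
    (ENNReal.ofReal_mul (by
      have : a j.castSucc ≤ a j.succ := ha (Fin.castSucc_le_succ j)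
      have h4 : ((a j.castSucc : ℕ) : ℝ) ≤ ((a j.succ : ℕ) : ℝ) := by exact_mod_cast this
      exact div_nonneg (by linarith) (by positivity))).symm
  simp_rw [hterm]
  set t : Fin (n + 1) → ℝ := fun j =>
    ((((a j.succ : ℕ) : ℝ) + 1 - ((a j.castSucc : ℕ) : ℝ)) / (n + 1)) * (1 / (n + 1)) with ht
  have htnn : ∀ j ∈ Finset.univ, 0 ≤ t j := by
    intro j _
    have h3 : a j.castSucc ≤ a j.succ := ha (Fin.castSucc_le_succ j)
    have h4 : ((a j.castSucc : ℕ) : ℝ) ≤ ((a j.succ : ℕ) : ℝ) := by exact_mod_cast h3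
    have h5 : (0:ℝ) ≤ (((a j.succ : ℕ) : ℝ) + 1 - ((a j.castSucc : ℕ) : ℝ)) / (n + 1) :=
      div_nonneg (by linarith) hn1.le
    exact mul_nonneg h5 (by positivity)
  rw [← ENNReal.ofReal_sum_of_nonneg htnn]
  apply ENNReal.ofReal_le_ofReal
  -- telescoping bound on the real sum
  set F : ℕ → ℝ := fun i => ((a ⟨min i (n + 1), by omega⟩ : ℕ) : ℝ) with hFdef
  have hterm2 : ∀ j : Fin (n + 1),
      ((a j.succ : ℕ) : ℝ) + 1 - ((a j.castSucc : ℕ) : ℝ)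
        = (F ((j : ℕ) + 1) - F (j : ℕ)) + 1 := by
    intro j
    have e1 : j.succ = (⟨min ((j : ℕ) + 1) (n + 1), by omega⟩ : Fin (n + 2)) := by
      ext
      simp only [Fin.val_succ]
      have : (j : ℕ) < n + 1 := j.isLt
      omega
    have e2 : j.castSucc = (⟨min (j : ℕ) (n + 1), by omega⟩ : Fin (n + 2)) := by
      ext
      simp only [Fin.coe_castSucc]
      have : (j : ℕ) < n + 1 := j.isLt
      omega
    rw [e1, e2]
    simp only [hFdef]
    ring
  have hnum : ∑ j : Fin (n + 1), (((a j.succ : ℕ) : ℝ) + 1 - ((a j.castSucc : ℕ) : ℝ))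
      ≤ 2 * ((n : ℝ) + 1) := by
    have : ∑ j : Fin (n + 1), (((a j.succ : ℕ) : ℝ) + 1 - ((a j.castSucc : ℕ) : ℝ))
        = ∑ j ∈ Finset.range (n + 1), ((F (j + 1) - F j) + 1) := by
      rw [← Fin.sum_univ_eq_sum_range (fun j => (F (j + 1) - F j) + 1) (n + 1)]
      exact Finset.sum_congr rfl fun j _ => hterm2 j
    rw [this, Finset.sum_add_distrib, Finset.sum_range_sub, Finset.sum_const,
      Finset.card_range]
    have hF1 : F (n + 1) ≤ (n : ℝ) + 1 := by
      have : ((a ⟨min (n + 1) (n + 1), by omega⟩ : Fin (n + 2)) : ℕ) ≤ n + 1 :=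
        Nat.lt_succ_iff.mp (a _).isLt
      calc F (n + 1) = ((a ⟨min (n + 1) (n + 1), by omega⟩ : ℕ) : ℝ) := rfl
        _ ≤ ((n + 1 : ℕ) : ℝ) := by exact_mod_cast this
        _ = (n : ℝ) + 1 := by push_cast; ring
    have hF0 : (0 : ℝ) ≤ F 0 := by positivity
    simp only [nsmul_eq_mul, mul_one]
    push_cast
    linarith
  have hsum_eq : ∑ j : Fin (n + 1), t j
      = (∑ j : Fin (n + 1), (((a j.succ : ℕ) : ℝ) + 1 - ((a j.castSucc : ℕ) : ℝ)))
        / (((n : ℝ) + 1) * ((n : ℝ) + 1)) := by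
    rw [Finset.sum_div]
    refine Finset.sum_congr rfl fun j _ => ?_
    simp only [ht]
    field_simp
  rw [hsum_eq]
  rw [div_le_div_iff₀ (by positivity) hn1]
  nlinarith [hnum]

/-- Every monotone `f : [0,1] → [0,1]` is covered by some bracket. -/
lemma cover (n : ℕ) (f : ℝ → ℝ) (hf : MonotoneOn f (Set.Icc 0 1))
    (hmaps : ∀ x ∈ Set.Icc (0:ℝ) 1, f x ∈ Set.Icc (0:ℝ) 1) :
    ∃ a : Fin (n + 2) → Fin (n + 2), Monotone a ∧
      ∀ x ∈ Set.Icc (0:ℝ) 1, loF n a x ≤ f x ∧ f x ≤ hiF n a x := by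
  have hn1 : (0 : ℝ) < (n : ℝ) + 1 := by positivity
  have hgrid : ∀ i : Fin (n + 2), ((i : ℕ) : ℝ) / (n + 1) ∈ Set.Icc (0:ℝ) 1 := by
    intro i
    constructor
    · positivity
    · rw [div_le_one hn1]
      have : (i : ℕ) ≤ n + 1 := Nat.lt_succ_iff.mp i.isLt
      exact_mod_cast this
  have hval : ∀ i : Fin (n + 2), ⌊((n : ℝ) + 1) * f ((i : ℕ) / (n + 1))⌋₊ < n + 2 := by
    intro i
    have hfi := hmaps _ (hgrid i)
    have h1 : ((n : ℝ) + 1) * f ((i : ℕ) / (n + 1)) ≤ ((n : ℝ) + 1) := by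
      nlinarith [hfi.2]
    have : ⌊((n : ℝ) + 1) * f ((i : ℕ) / (n + 1))⌋₊ ≤ ⌊((n : ℝ) + 1)⌋₊ :=
      Nat.floor_le_floor h1
    have h2 : ⌊((n : ℝ) + 1)⌋₊ = n + 1 := by
      rw [show ((n : ℝ) + 1) = ((n + 1 : ℕ) : ℝ) by push_cast; ring, Nat.floor_natCast]
    omega
  refine ⟨fun i => ⟨⌊((n : ℝ) + 1) * f ((i : ℕ) / (n + 1))⌋₊, hval i⟩, ?_, ?_⟩
  · -- monotone
    intro i j hij
    rw [Fin.mk_le_mk]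
    apply Nat.floor_le_floor
    have hle : ((i : ℕ) : ℝ) / (n + 1) ≤ ((j : ℕ) : ℝ) / (n + 1) := by
      gcongr
      exact_mod_cast hij
    have := hf (hgrid i) (hgrid j) hle
    nlinarith
  · intro x hx
    set j := idx n x with hj
    have hjle : j ≤ n := idx_le n x
    have hx0 : (0 : ℝ) ≤ x * ((n : ℝ) + 1) := mul_nonneg hx.1 hn1.le
    have hjdef : j = min n ⌊x * ((n : ℝ) + 1)⌋₊ := by rw [hj, idx]
    -- j/(n+1) ≤ x
    have hA : ((j : ℕ) : ℝ) / (n + 1) ≤ x := by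
      rw [div_le_iff₀ hn1]
      have hjle2 : j ≤ ⌊x * ((n : ℝ) + 1)⌋₊ := by rw [hjdef]; exact min_le_right _ _
      calc ((j : ℕ) : ℝ) ≤ (⌊x * ((n : ℝ) + 1)⌋₊ : ℝ) := by exact_mod_cast hjle2
        _ ≤ x * ((n : ℝ) + 1) := Nat.floor_le hx0
    -- x ≤ (j+1)/(n+1)
    have hB : x ≤ (((j : ℕ) : ℝ) + 1) / (n + 1) := by
      rcases le_or_gt ⌊x * ((n : ℝ) + 1)⌋₊ n with hcase | hcase
      · have hjf : j = ⌊x * ((n : ℝ) + 1)⌋₊ := by rw [hjdef]; exact min_eq_right hcase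
        rw [le_div_iff₀ hn1, hjf]
        push_cast
        exact (Nat.lt_floor_add_one (x * ((n : ℝ) + 1))).le
      · have hjf : j = n := by rw [hjdef]; omega
        rw [hjf, le_div_iff₀ hn1]
        push_cast
        nlinarith [hx.2]
    have hjr : ((j : ℕ) : ℝ) ≤ (n : ℝ) := by exact_mod_cast hjle
    have hmemj : ((j : ℕ) : ℝ) / (n + 1) ∈ Set.Icc (0:ℝ) 1 := by
      constructor
      · positivity
      · rw [div_le_one hn1]; linarith
    have hmemj1 : (((j : ℕ) : ℝ) + 1) / (n + 1) ∈ Set.Icc (0:ℝ) 1 := by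
      constructor
      · positivity
      · rw [div_le_one hn1]; linarith
    have hf0 : ∀ y ∈ Set.Icc (0:ℝ) 1, 0 ≤ ((n : ℝ) + 1) * f y := by
      intro y hy
      have := (hmaps y hy).1
      positivity
    constructor
    · -- lower bound
      have hlo : loF n (fun i => ⟨⌊((n : ℝ) + 1) * f ((i : ℕ) / (n + 1))⌋₊, hval i⟩) x
          = (⌊((n : ℝ) + 1) * f (((j : ℕ) : ℝ) / (n + 1))⌋₊ : ℝ) / (n + 1) := rfl
      rw [hlo, div_le_iff₀ hn1]
      calc (⌊((n : ℝ) + 1) * f (((j : ℕ) : ℝ) / (n + 1))⌋₊ : ℝ)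
          ≤ ((n : ℝ) + 1) * f (((j : ℕ) : ℝ) / (n + 1)) :=
            Nat.floor_le (hf0 _ hmemj)
        _ ≤ f x * (n + 1) := by
            have := hf hmemj hx hA
            nlinarith
    · -- upper bound
      have hhi : hiF n (fun i => ⟨⌊((n : ℝ) + 1) * f ((i : ℕ) / (n + 1))⌋₊, hval i⟩) x
          = ((⌊((n : ℝ) + 1) * f (((j + 1 : ℕ) : ℝ) / (n + 1))⌋₊ : ℝ) + 1) / (n + 1) := rfl
      rw [hhi, le_div_iff₀ hn1]
      have hcast : ((j + 1 : ℕ) : ℝ) = ((j : ℕ) : ℝ) + 1 := by push_cast; ring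
      calc f x * (n + 1) ≤ f (((j + 1 : ℕ) : ℝ) / (n + 1)) * (n + 1) := by
            have hfle : f x ≤ f (((j + 1 : ℕ) : ℝ) / (n + 1)) := by
              rw [hcast]
              exact hf hx hmemj1 hB
            nlinarith
        _ ≤ (⌊((n : ℝ) + 1) * f (((j + 1 : ℕ) : ℝ) / (n + 1))⌋₊ : ℝ) + 1 := by
            have := Nat.lt_floor_add_one (((n : ℝ) + 1) * f (((j + 1 : ℕ) : ℝ) / (n + 1)))
            nlinarith

lemma card_le (n : ℕ) :
    Nat.card {a : Fin (n + 2) → Fin (n + 2) // Monotone a} ≤ 2 ^ (2 * n + 4) := by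
  classical
  set φ : {a : Fin (n + 2) → Fin (n + 2) // Monotone a} → Finset (Fin (2 * n + 4)) :=
    fun a => Finset.image
      (fun i : Fin (n + 2) => (⟨(a.1 i : ℕ) + (i : ℕ), by
        have h1 := (a.1 i).isLt
        have h2 := i.isLt
        omega⟩ : Fin (2 * n + 4))) Finset.univ with hφ
  have hstrict : ∀ a : {a : Fin (n + 2) → Fin (n + 2) // Monotone a},
      StrictMono (fun i : Fin (n + 2) => (⟨(a.1 i : ℕ) + (i : ℕ), by
        have h1 := (a.1 i).isLt
        have h2 := i.isLt
        omega⟩ : Fin (2 * n + 4))) := by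
    intro a i i' hii
    have h1 : a.1 i ≤ a.1 i' := a.2 hii.le
    rw [Fin.lt_def]
    have h2 : (a.1 i : ℕ) ≤ (a.1 i' : ℕ) := h1
    have h3 : (i : ℕ) < (i' : ℕ) := hii
    simpa using by omega
  have hinj : Function.Injective φ := by
    intro a b hab
    have hcards : ∀ c : {a : Fin (n + 2) → Fin (n + 2) // Monotone a},
        (φ c).card = n + 2 := by
      intro c
      rw [hφ]
      rw [Finset.card_image_of_injective _ (hstrict c).injective, Finset.card_univ,
        Fintype.card_fin]
    have ha := Finset.orderEmbOfFin_unique (hcards a)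
      (f := fun i : Fin (n + 2) => (⟨(a.1 i : ℕ) + (i : ℕ), by
        have h1 := (a.1 i).isLt; have h2 := i.isLt; omega⟩ : Fin (2 * n + 4)))
      (fun x => Finset.mem_image_of_mem _ (Finset.mem_univ x)) (hstrict a)
    have hb := Finset.orderEmbOfFin_unique (hcards b)
      (f := fun i : Fin (n + 2) => (⟨(b.1 i : ℕ) + (i : ℕ), by
        have h1 := (b.1 i).isLt; have h2 := i.isLt; omega⟩ : Fin (2 * n + 4)))
      (fun x => Finset.mem_image_of_mem _ (Finset.mem_univ x)) (hstrict b)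
    have hcc : (φ a).card = (φ b).card := by rw [hab]
    have heq : ∀ i : Fin (n + 2), (a.1 i : ℕ) + (i : ℕ) = (b.1 i : ℕ) + (i : ℕ) := by
      intro i
      have h1 := congrFun ha i
      have h2 := congrFun hb i
      have h3 : (φ a).orderEmbOfFin (hcards a) = (φ b).orderEmbOfFin (hcards b) := by
        congr 1
      rw [h3] at h1
      have := h1.trans h2.symm
      exact congrArg Fin.val this
    apply Subtype.ext
    funext i
    have := heq i
    exact Fin.ext (by omega)
  calc Nat.card {a : Fin (n + 2) → Fin (n + 2) // Monotone a}
      ≤ Nat.card (Finset (Fin (2 * n + 4))) := Nat.card_le_card_of_injective φ hinj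
    _ = 2 ^ (2 * n + 4) := by
        rw [Nat.card_eq_fintype_card, Fintype.card_finset, Fintype.card_fin]

end BracketAux

/-- Bracketing entropy of nondecreasing functions `[0,1] → [0,1]` in `L^1`:
`log N_[](ε, F_1, ‖·‖_1) ≤ C/ε` for an absolute constant `C`. -/
theorem log_bracketing_monotone_dim_one :
    ∃ C : ℝ, 0 < C ∧ ∀ ε : ℝ, 0 < ε → ε < 1 →
      ∃ (m : ℕ) (lo hi : Fin m → ℝ → ℝ),
        (∀ k, eLpNorm (fun x => hi k x - lo k x) 1
            (volume.restrict (Set.Icc (0:ℝ) 1)) ≤ ENNReal.ofReal ε) ∧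
        (∀ f : ℝ → ℝ, MonotoneOn f (Set.Icc 0 1) →
          (∀ x ∈ Set.Icc (0:ℝ) 1, f x ∈ Set.Icc (0:ℝ) 1) →
          ∃ k, ∀ x ∈ Set.Icc (0:ℝ) 1, lo k x ≤ f x ∧ f x ≤ hi k x) ∧
        Real.log m ≤ C / ε := by
  classical
  refine ⟨12 * Real.log 2, by positivity, fun ε hε hε1 => ?_⟩
  set n : ℕ := ⌈3 / ε⌉₊ with hn
  have hn3 : (3 : ℝ) / ε ≤ (n : ℝ) := Nat.le_ceil _
  have hn1 : (0 : ℝ) < (n : ℝ) + 1 := by positivity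
  set A := {a : Fin (n + 2) → Fin (n + 2) // Monotone a} with hA
  haveI : Fintype A := Fintype.ofFinite A
  set m := Fintype.card A with hm
  set e := (Fintype.equivFin A).symm with he
  refine ⟨m, fun k => BracketAux.loF n (e k).1, fun k => BracketAux.hiF n (e k).1, ?_, ?_, ?_⟩
  · intro k
    refine (BracketAux.width_le n (e k).2).trans (ENNReal.ofReal_le_ofReal ?_)
    rw [div_le_iff₀ hn1]
    have h2 : (2 : ℝ) ≤ ε * (3 / ε) := by
      rw [mul_div_cancel₀ _ hε.ne']
      norm_num
    calc (2 : ℝ) ≤ ε * (3 / ε) := h2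
      _ ≤ ε * ((n : ℝ) + 1) := by nlinarith
  · intro f hf hmaps
    obtain ⟨a, ha, hcov⟩ := BracketAux.cover n f hf hmaps
    exact ⟨(Fintype.equivFin A) ⟨a, ha⟩, by
      intro x hx
      simpa [he] using hcov x hx⟩
  · have hm2 : (m : ℝ) ≤ (2 : ℝ) ^ (2 * n + 4) := by
      have := BracketAux.card_le n
      rw [Nat.card_eq_fintype_card] at this
      calc (m : ℝ) ≤ ((2 ^ (2 * n + 4) : ℕ) : ℝ) := by exact_mod_cast this
        _ = (2 : ℝ) ^ (2 * n + 4) := by push_cast; ring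
    have hmpos : 0 < m := Fintype.card_pos_iff.2 ⟨⟨fun _ => 0, monotone_const⟩⟩
    have hlog : Real.log m ≤ (2 * (n : ℝ) + 4) * Real.log 2 := by
      calc Real.log m ≤ Real.log ((2 : ℝ) ^ (2 * n + 4)) :=
            Real.log_le_log (by exact_mod_cast hmpos) hm2
        _ = ((2 * n + 4 : ℕ) : ℝ) * Real.log 2 := by rw [Real.log_pow]
        _ = (2 * (n : ℝ) + 4) * Real.log 2 := by push_cast; ring
    refine hlog.trans ?_
    rw [le_div_iff₀ hε]
    have hnlt : (n : ℝ) < 3 / ε + 1 := by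
      have := Nat.ceil_lt_add_one (by positivity : (0:ℝ) ≤ 3 / ε)
      exact_mod_cast this
    have hlog2 : (0 : ℝ) < Real.log 2 := Real.log_pos (by norm_num)
    have key : (2 * (n : ℝ) + 4) * ε ≤ 12 := by
      have h1 : (1 : ℝ) ≤ 1 / ε := by
        rw [le_div_iff₀ hε]; linarith
      have h2 : (n : ℝ) * ε < 3 + ε := by
        have := mul_lt_mul_of_pos_right hnlt hε
        calc (n : ℝ) * ε < (3 / ε + 1) * ε := this
          _ = 3 + ε := by field_simp
      nlinarith
    nlinarith
end

section
/- Let d ≥ 2, ε = 2^{−n}, and partition [0,1)^d into ε^{−d} half-open cubes of side ε indexed by (k_1,…,k_d) ∈ {0,…,2^n−1}^d. For any choice of signs σ(k) ∈ {−1, +1}, the function g defined on the open cube ∏_i (k_i ε, k_i ε + ε) by g(x) = (k_1+⋯+k_d+1)ε/(3d) + σ(k)·ε/(6d) is nondecreasing in each coordinate on the union of the open cubes, takes values in [0,1], and extends to a coordinatewise nondecreasing function on [0,1]^d with values in [0,1]. Moreover, for two such functions g, h built from sign choices σ, τ, ‖g − h‖_{L^1([0,1]^d)} ≥ (ε/(3d))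 · ε^d · #{k : σ(k) ≠ τ(k)}. -/
open MeasureTheory
open scoped ENNReal Classical

/-- `G` is a coordinatewise-nondecreasing `[0,1]`-valued extension to `[0,1]^d` of the
step function determined by the sign choice `σ` on the grid of open cubes of side
`ε = 2^{-n}`:  on the open cube `∏ᵢ (kᵢε, kᵢε + ε)` it equals
`(k₁+⋯+k_d+1)ε/(3d) + σ(k)·ε/(6d)`. -/
def IsSignExtension (d n : ℕ) (ε : ℝ) (σ : (Fin d → Fin (2 ^ n)) → ℝ)
    (G : (Fin d → ℝ) → ℝ) : Prop :=
  MonotoneOn G (Set.univ.pi fun _ : Fin d => Set.Icc (0:ℝ) 1) ∧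
  (∀ x ∈ Set.univ.pi fun _ : Fin d => Set.Icc (0:ℝ) 1, G x ∈ Set.Icc (0:ℝ) 1) ∧
  ∀ k : Fin d → Fin (2 ^ n), ∀ x : Fin d → ℝ,
    (∀ i, (k i : ℝ) * ε < x i ∧ x i < (k i : ℝ) * ε + ε) →
    G x = ((∑ i, (k i : ℕ) : ℕ) + 1) * ε / (3 * d) + σ k * ε / (6 * d)

noncomputable def sePert (d n : ℕ) (ε : ℝ) (σ : (Fin d → Fin (2 ^ n)) → ℝ)
    (x : Fin d → ℝ) : ℝ :=
  if h : ∀ i, (⌊x i / ε⌋ : ℝ) * ε < x i ∧ ⌊x i / ε⌋.toNat < 2 ^ n ∧ 0 ≤ ⌊x i / ε⌋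
  then σ (fun i => ⟨⌊x i / ε⌋.toNat, (h i).2.1⟩) else -1

noncomputable def seFun (d n : ℕ) (ε : ℝ) (σ : (Fin d → Fin (2 ^ n)) → ℝ)
    (x : Fin d → ℝ) : ℝ :=
  ((∑ i, (⌊x i / ε⌋ : ℝ)) + 1) * ε / (3 * d) + sePert d n ε σ x * ε / (6 * d)

lemma floor_cube (a b : ℝ) (ha : 0 < a) (k : ℤ) (h1 : (k:ℝ)*a < b) (h2 : b < (k:ℝ)*a + a) :
    ⌊b / a⌋ = k := by
  rw [Int.floor_eq_iff]
  constructor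
  · rw [le_div_iff₀ ha]; linarith
  · rw [div_lt_iff₀ ha]; push_cast; linarith

lemma sePert_mem (d n : ℕ) (ε : ℝ) (σ : (Fin d → Fin (2 ^ n)) → ℝ)
    (hσ : ∀ k, σ k = 1 ∨ σ k = -1) (x : Fin d → ℝ) :
    -1 ≤ sePert d n ε σ x ∧ sePert d n ε σ x ≤ 1 := by
  unfold sePert
  split
  · rcases hσ _ with h | h <;> rw [h] <;> norm_num
  · norm_num

lemma seFun_cube (d n : ℕ) (ε : ℝ) (hεpos : 0 < ε) (σ : (Fin d → Fin (2 ^ n)) → ℝ)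
    (k : Fin d → Fin (2 ^ n)) (x : Fin d → ℝ)
    (hx : ∀ i, (k i : ℝ) * ε < x i ∧ x i < (k i : ℝ) * ε + ε) :
    seFun d n ε σ x = ((∑ i, (k i : ℕ) : ℕ) + 1) * ε / (3 * d) + σ k * ε / (6 * d) := by
  have hf : ∀ i, ⌊x i / ε⌋ = (k i : ℤ) := fun i => by
    apply floor_cube _ _ hεpos
    · exact_mod_cast (hx i).1
    · exact_mod_cast (hx i).2
  have hcond : ∀ i, (⌊x i / ε⌋ : ℝ) * ε < x i ∧ ⌊x i / ε⌋.toNat < 2 ^ n ∧ 0 ≤ ⌊x i / ε⌋ := by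
    intro i
    rw [hf i]
    refine ⟨by exact_mod_cast (hx i).1, by simp [(k i).isLt], by positivity⟩
  have h1 : sePert d n ε σ x = σ k := by
    unfold sePert
    rw [dif_pos hcond]
    congr 1
    funext i
    apply Fin.ext
    simp [hf i]
  have h2 : (∑ i, (⌊x i / ε⌋ : ℝ)) = ((∑ i, (k i : ℕ) : ℕ) : ℝ) := by
    push_cast
    exact Finset.sum_congr rfl fun i _ => by rw [hf i]; norm_num
  rw [seFun, h1, h2]

lemma seFun_mono (d n : ℕ) (hd : 1 ≤ d) (ε : ℝ) (hεpos : 0 < ε)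
    (σ : (Fin d → Fin (2 ^ n)) → ℝ) (hσ : ∀ k, σ k = 1 ∨ σ k = -1) :
    MonotoneOn (seFun d n ε σ) (Set.univ.pi fun _ : Fin d => Set.Icc (0:ℝ) 1) := by
  have hd0 : (0:ℝ) < d := by exact_mod_cast hd
  intro x hx y hy hxy
  have hfg : ∀ i, ⌊x i / ε⌋ ≤ ⌊y i / ε⌋ := fun i =>
    Int.floor_le_floor (by gcongr; exact hxy i)
  have hS : (∑ i, (⌊x i / ε⌋ : ℝ)) ≤ ∑ i, (⌊y i / ε⌋ : ℝ) :=
    Finset.sum_le_sum fun i _ => by exact_mod_cast hfg i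
  have hu : (0:ℝ) < ε / (6 * d) := by positivity
  have h36 : ε / (3 * d) = 2 * (ε / (6 * d)) := by field_simp; ring
  have hpx := sePert_mem d n ε σ hσ x
  have hpy := sePert_mem d n ε σ hσ y
  rcases eq_or_lt_of_le hS with hSeq | hSlt
  · -- sums of floors equal, hence floors equal
    have hfeq : ∀ i, ⌊x i / ε⌋ = ⌊y i / ε⌋ := by
      intro i
      have := (Finset.sum_eq_sum_iff_of_le (fun i _ => hfg i)).mp ?_ i (Finset.mem_univ i)
      · exact this
      · exact_mod_cast hSeq
    have hbase : (∑ i, (⌊x i / ε⌋ : ℝ)) = ∑ i, (⌊y i / ε⌋ : ℝ) := hSeq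
    unfold seFun
    rw [hbase]
    gcongr ?_ + ?_
    · exact le_rfl
    · -- compare perturbation terms
      by_cases hc : ∀ i, (⌊x i / ε⌋ : ℝ) * ε < x i ∧ ⌊x i / ε⌋.toNat < 2 ^ n ∧ 0 ≤ ⌊x i / ε⌋
      · have hc' : ∀ i, (⌊y i / ε⌋ : ℝ) * ε < y i ∧ ⌊y i / ε⌋.toNat < 2 ^ n ∧ 0 ≤ ⌊y i / ε⌋ := by
          intro i
          rw [← hfeq i]
          exact ⟨lt_of_lt_of_le (hc i).1 (hxy i), (hc i).2⟩
        have : sePert d n ε σ x = sePert d n ε σ y := by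
          unfold sePert
          rw [dif_pos hc, dif_pos hc']
          congr 1
          funext i
          apply Fin.ext
          simp [hfeq i]
        rw [this]
      · have hx1 : sePert d n ε σ x = -1 := by unfold sePert; rw [dif_neg hc]
        rw [hx1, div_le_div_iff_of_pos_right (by positivity)]
        nlinarith [hpy.1]
  · -- strictly larger sum
    have hstep : (∑ i, (⌊x i / ε⌋ : ℝ)) + 1 ≤ ∑ i, (⌊y i / ε⌋ : ℝ) := by
      have : (∑ i, ⌊x i / ε⌋) + 1 ≤ ∑ i, ⌊y i / ε⌋ := by
        have h' : (∑ i, ⌊x i / ε⌋) < ∑ i, ⌊y i / ε⌋ := by exact_mod_cast hSlt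
        omega
      exact_mod_cast this
    unfold seFun
    set S := ∑ i, (⌊x i / ε⌋ : ℝ)
    set T := ∑ i, (⌊y i / ε⌋ : ℝ)
    set u := ε / (6 * d)
    have e1 : (S + 1) * ε / (3 * d) = (S + 1) * (2 * u) := by
      rw [mul_div_assoc, h36]
    have e2 : (T + 1) * ε / (3 * d) = (T + 1) * (2 * u) := by
      rw [mul_div_assoc, h36]
    have e3 : sePert d n ε σ x * ε / (6 * d) = sePert d n ε σ x * u := mul_div_assoc _ _ _
    have e4 : sePert d n ε σ y * ε / (6 * d) = sePert d n ε σ y * u := mul_div_assoc _ _ _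
    rw [e1, e2, e3, e4]
    nlinarith [mul_nonneg (sub_nonneg.mpr hstep) hu.le,
      mul_nonneg (sub_nonneg.mpr hpx.2) hu.le,
      mul_nonneg (sub_nonneg.mpr (neg_le_iff_add_nonneg.mp hpy.1 : (0:ℝ) ≤ sePert d n ε σ y + 1)) hu.le]

lemma seFun_range (d n : ℕ) (hd : 2 ≤ d) (ε : ℝ) (hεpos : 0 < ε) (hεle1 : ε ≤ 1)
    (hε1 : ε * 2 ^ n = 1)
    (σ : (Fin d → Fin (2 ^ n)) → ℝ) (hσ : ∀ k, σ k = 1 ∨ σ k = -1) :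
    ∀ x ∈ Set.univ.pi fun _ : Fin d => Set.Icc (0:ℝ) 1,
      seFun d n ε σ x ∈ Set.Icc (0:ℝ) 1 := by
  have hd0 : (2:ℝ) ≤ d := by exact_mod_cast hd
  have hdpos : (0:ℝ) < d := by linarith
  intro x hx
  have hxi : ∀ i, x i ∈ Set.Icc (0:ℝ) 1 := fun i => hx i (Set.mem_univ i)
  have hf0 : ∀ i, (0:ℝ) ≤ (⌊x i / ε⌋ : ℝ) := by
    intro i
    have : (0:ℤ) ≤ ⌊x i / ε⌋ := Int.floor_nonneg.mpr (div_nonneg (hxi i).1 hεpos.le)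
    exact_mod_cast this
  have hfub : ∀ i, (⌊x i / ε⌋ : ℝ) ≤ 2 ^ n := by
    intro i
    calc (⌊x i / ε⌋ : ℝ) ≤ x i / ε := Int.floor_le _
    _ ≤ 1 / ε := by gcongr; exact (hxi i).2
    _ = 2 ^ n := by field_simp; linarith [hε1]
  have hS0 : (0:ℝ) ≤ ∑ i, (⌊x i / ε⌋ : ℝ) := Finset.sum_nonneg fun i _ => hf0 i
  have hSub : (∑ i, (⌊x i / ε⌋ : ℝ)) ≤ d * 2 ^ n := by
    calc (∑ i, (⌊x i / ε⌋ : ℝ)) ≤ ∑ _i : Fin d, (2:ℝ) ^ n :=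
      Finset.sum_le_sum fun i _ => hfub i
    _ = d * 2 ^ n := by simp [Finset.sum_const, mul_comm]
  have hp := sePert_mem d n ε σ hσ x
  have hu : (0:ℝ) < ε / (6 * d) := by positivity
  have h36 : ε / (3 * d) = 2 * (ε / (6 * d)) := by field_simp; ring
  unfold seFun
  set S := ∑ i, (⌊x i / ε⌋ : ℝ)
  set p := sePert d n ε σ x
  set u := ε / (6 * d) with hu_def
  have e1 : (S + 1) * ε / (3 * d) = (S + 1) * (2 * u) := by rw [mul_div_assoc, h36]
  have e2 : p * ε / (6 * d) = p * u := mul_div_assoc _ _ _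
  rw [e1, e2]
  have hdn : (d:ℝ) * 2 ^ n * ε = d := by
    rw [mul_assoc, mul_comm ((2:ℝ)^n) ε, hε1, mul_one]
  constructor
  · nlinarith [mul_nonneg hS0 hu.le, mul_nonneg (by linarith [hp.1] : (0:ℝ) ≤ 1 + p) hu.le]
  · have key : ((d:ℝ) * 2 ^ n + 1) * (2 * u) + u ≤ 1 := by
      have heq : ((d:ℝ) * 2 ^ n + 1) * (2 * u) + u = (2 * (d * 2 ^ n * ε) + 3 * ε) / (6 * d) := by
        rw [hu_def]; field_simp; ring
      rw [heq, hdn, div_le_one (by positivity)]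
      linarith
    nlinarith [mul_nonneg (sub_nonneg.mpr hSub) hu.le,
      mul_nonneg (sub_nonneg.mpr hp.2) hu.le]

lemma separated (d n : ℕ) (hd : 2 ≤ d) (ε : ℝ) (hεpos : 0 < ε)
    (hε1 : ε * 2 ^ n = 1)
    (σ τ : (Fin d → Fin (2 ^ n)) → ℝ)
    (hσ : ∀ k, σ k = 1 ∨ σ k = -1) (hτ : ∀ k, τ k = 1 ∨ τ k = -1)
    (G H : (Fin d → ℝ) → ℝ) (hG : IsSignExtension d n ε σ G) (hH : IsSignExtension d n ε τ H) :
    ENNReal.ofReal (ε / (3 * d) * ε ^ d *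
        ((Finset.univ.filter fun k : Fin d → Fin (2 ^ n) => σ k ≠ τ k).card : ℝ))
      ≤ eLpNorm (fun x => G x - H x) 1
          (volume.restrict (Set.univ.pi fun _ : Fin d => Set.Icc (0:ℝ) 1)) := by
  have hdpos : (0:ℝ) < d := by exact_mod_cast lt_of_lt_of_le (by norm_num) hd
  set D := Finset.univ.filter fun k : Fin d → Fin (2 ^ n) => σ k ≠ τ k with hD
  set C : (Fin d → Fin (2 ^ n)) → Set (Fin d → ℝ) :=
    fun k => Set.univ.pi fun i => Set.Ioo ((k i : ℝ) * ε) ((k i : ℝ) * ε + ε) with hC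
  have hCmeas : ∀ k, MeasurableSet (C k) :=
    fun k => MeasurableSet.univ_pi fun i => measurableSet_Ioo
  have hCS : ∀ k, C k ⊆ Set.univ.pi fun _ : Fin d => Set.Icc (0:ℝ) 1 := by
    intro k x hx i _
    have hi := hx i (Set.mem_univ i)
    have h1 : (0:ℝ) ≤ (k i : ℝ) * ε := by positivity
    have h2 : (k i : ℝ) * ε + ε ≤ 1 := by
      have hk : (k i : ℝ) + 1 ≤ 2 ^ n := by exact_mod_cast (k i).isLt
      calc (k i : ℝ) * ε + ε = ((k i : ℝ) + 1) * ε := by ring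
      _ ≤ 2 ^ n * ε := by gcongr
      _ = 1 := by rw [mul_comm]; exact hε1
    exact ⟨by linarith [hi.1], by linarith [hi.2]⟩
  have hCvol : ∀ k, volume (C k) = ENNReal.ofReal (ε ^ d) := by
    intro k
    rw [hC]
    rw [volume_pi_pi]
    simp only [Real.volume_Ioo, add_sub_cancel_left]
    rw [Finset.prod_const, Finset.card_univ, Fintype.card_fin, ← ENNReal.ofReal_pow hεpos.le]
  have hdisj : (D : Set (Fin d → Fin (2 ^ n))).PairwiseDisjoint C := by
    intro k _ k' _ hkk'
    have : ∃ i, k i ≠ k' i := by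
      by_contra h
      push_neg at h
      exact hkk' (funext h)
    obtain ⟨i, hi⟩ := this
    rw [Function.onFun, Set.disjoint_left]
    intro x hxk hxk'
    have h1 := hxk i (Set.mem_univ i)
    have h2 := hxk' i (Set.mem_univ i)
    rcases lt_or_gt_of_ne (fun h => hi (Fin.ext h) : (k i : ℕ) ≠ (k' i : ℕ)) with h | h
    · have : ((k i : ℕ) : ℝ) + 1 ≤ (k' i : ℕ) := by exact_mod_cast h
      nlinarith [h1.2, h2.1]
    · have : ((k' i : ℕ) : ℝ) + 1 ≤ (k i : ℕ) := by exact_mod_cast h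
      nlinarith [h2.2, h1.1]
  have hval : ∀ k ∈ D, ∀ x ∈ C k, (‖G x - H x‖₊ : ℝ≥0∞) = ENNReal.ofReal (ε / (3 * d)) := by
    intro k hk x hx
    have hx' : ∀ i, (k i : ℝ) * ε < x i ∧ x i < (k i : ℝ) * ε + ε := by
      intro i; exact hx i (Set.mem_univ i)
    have hGx := hG.2.2 k x hx'
    have hHx := hH.2.2 k x hx'
    have hne : σ k ≠ τ k := by
      simp only [hD, Finset.mem_filter] at hk; exact hk.2
    have habs : |G x - H x| = ε / (3 * d) := by
      rcases hσ k with h1 | h1 <;> rcases hτ k with h2 | h2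
      · exact absurd (h1.trans h2.symm) hne
      · have hdiff : G x - H x = ε / (3 * d) := by
          rw [hGx, hHx, h1, h2]; field_simp; ring
        rw [hdiff, abs_of_nonneg (by positivity)]
      · have hdiff : G x - H x = -(ε / (3 * d)) := by
          rw [hGx, hHx, h1, h2]; field_simp; ring
        rw [hdiff, abs_neg, abs_of_nonneg (by positivity)]
      · exact absurd (h1.trans h2.symm) hne
    rw [← habs]; exact Real.enorm_eq_ofReal_abs _
  have hcube : ∀ k ∈ D, (∫⁻ x in C k, (‖G x - H x‖₊ : ℝ≥0∞) ∂volume)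
      = ENNReal.ofReal (ε / (3 * d)) * ENNReal.ofReal (ε ^ d) := by
    intro k hk
    rw [setLIntegral_congr_fun (hCmeas k)
      (fun x hx => hval k hk x hx),
      setLIntegral_const, hCvol k]
  calc ENNReal.ofReal (ε / (3 * d) * ε ^ d * (D.card : ℝ))
      = ENNReal.ofReal (ε / (3 * d)) * ENNReal.ofReal (ε ^ d) * D.card := by
        rw [ENNReal.ofReal_mul (by positivity), ENNReal.ofReal_mul (by positivity),
          ENNReal.ofReal_natCast]
    _ = ∑ k ∈ D, (∫⁻ x in C k, (‖G x - H x‖₊ : ℝ≥0∞) ∂volume) := by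
        rw [Finset.sum_congr rfl hcube, Finset.sum_const, nsmul_eq_mul, mul_comm]
    _ = ∫⁻ x in ⋃ k ∈ D, C k, (‖G x - H x‖₊ : ℝ≥0∞) ∂volume :=
        (lintegral_biUnion_finset hdisj (fun k _ => hCmeas k) _).symm
    _ ≤ ∫⁻ x, (‖G x - H x‖₊ : ℝ≥0∞)
          ∂(volume.restrict (Set.univ.pi fun _ : Fin d => Set.Icc (0:ℝ) 1)) := by
        refine lintegral_mono' (Measure.restrict_mono ?_ le_rfl) le_rfl
        exact Set.iUnion₂_subset fun k _ => hCS k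
    _ = eLpNorm (fun x => G x - H x) 1
          (volume.restrict (Set.univ.pi fun _ : Fin d => Set.Icc (0:ℝ) 1)) :=
        (eLpNorm_one_eq_lintegral_enorm (f := fun x => G x - H x)).symm

/-- For `d ≥ 2` and `ε = 2^{-n}`, every sign choice `σ : {cubes} → {±1}` gives rise to a
coordinatewise nondecreasing `[0,1]`-valued extension of the perturbed step function,
and any two such extensions built from sign choices `σ, τ` satisfy
`‖g − h‖₁ ≥ (ε/(3d)) · ε^d · #{k : σ(k) ≠ τ(k)}`. -/
theorem sign_extension_exists_and_separated (d n : ℕ) (hd : 2 ≤ d) (ε : ℝ)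
    (hε : ε = 2 ^ (-(n : ℝ)))
    (σ τ : (Fin d → Fin (2 ^ n)) → ℝ)
    (hσ : ∀ k, σ k = 1 ∨ σ k = -1) (hτ : ∀ k, τ k = 1 ∨ τ k = -1) :
    (∃ G : (Fin d → ℝ) → ℝ, IsSignExtension d n ε σ G) ∧
    ∀ G H : (Fin d → ℝ) → ℝ, IsSignExtension d n ε σ G → IsSignExtension d n ε τ H →
      ENNReal.ofReal (ε / (3 * d) * ε ^ d *
          ((Finset.univ.filter fun k : Fin d → Fin (2 ^ n) => σ k ≠ τ k).card : ℝ))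
        ≤ eLpNorm (fun x => G x - H x) 1
            (volume.restrict (Set.univ.pi fun _ : Fin d => Set.Icc (0:ℝ) 1)) := by
  have h2n : (0:ℝ) < 2 ^ n := by positivity
  have hεpos : 0 < ε := by rw [hε]; positivity
  have hε1 : ε * 2 ^ n = 1 := by
    rw [hε, ← Real.rpow_natCast 2 n, ← Real.rpow_add (by norm_num : (0:ℝ) < 2)]
    simp
  have hεle1 : ε ≤ 1 := by
    rw [hε]
    exact Real.rpow_le_one_of_one_le_of_nonpos (by norm_num) (by simp)
  refine ⟨⟨seFun d n ε σ, seFun_mono d n (le_trans (by norm_num) hd) ε hεpos σ hσ,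
      seFun_range d n hd ε hεpos hεle1 hε1 σ hσ,
      fun k x hx => seFun_cube d n ε hεpos σ k x hx⟩, ?_⟩
  intro G H hG hH
  exact separated d n hd ε hεpos hε1 σ τ hσ hτ G H hG hH
end
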